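/- arXiv:1209.5711 — 8 statements merged into one kernel-verified Lean document; each statement's English description precedes it below -/
import Mathlib

section
/- For x = (x1, x2, x3) in C^3, if |x1 - conj(x2)·x3| + |x2 - conj(x1)·x3| + |x3|^2 < 1, then |x1| < 1 and |x2| < 1 (i.e. the tetrablock is contained in the unit polydisc D^3). -/
open Complex

/-! By the triangle inequality `|x₁| ≤ a + t|x₂|` and `|x₂| ≤ b + t|x₁|`, where
`a = |x₁ - x̄₂x₃|`, `b = |x₂ - x̄₁x₃|`, `t = |x₃|`. Substituting one into the other gives
`(1 - t²)|x₁| ≤ a + tb ≤ a + b < 1 - t²`, and `1 - t² > 0`; symmetrically for `x₂`. -/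

lemma lt_one_of_le_add_mul_of_le_add_mul {p q a b t : ℝ} (ha : 0 ≤ a) (hb : 0 ≤ b) (ht : 0 ≤ t)
    (hp : p ≤ a + t * q) (hq : q ≤ b + t * p) (h : a + b + t ^ 2 < 1) : p < 1 := by
  have ht_le : t ≤ 1 := by nlinarith
  have hp' : (1 - t ^ 2) * p ≤ a + t * b := by nlinarith [mul_le_mul_of_nonneg_left hq ht]
  have htb : t * b ≤ b := mul_le_of_le_one_left hb ht_le
  nlinarith

lemma norm_le_norm_sub_star_mul_add {R : Type*} [NormedRing R] [StarRing R] [NormedStarGroup R]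
    (x y z : R) : ‖x‖ ≤ ‖x - star y * z‖ + ‖y‖ * ‖z‖ :=
  calc ‖x‖ = ‖(x - star y * z) + star y * z‖ := by rw [sub_add_cancel]
    _ ≤ ‖x - star y * z‖ + ‖star y‖ * ‖z‖ := (norm_add_le _ _).trans (by gcongr; exact norm_mul_le _ _)
    _ = ‖x - star y * z‖ + ‖y‖ * ‖z‖ := by rw [norm_star]

theorem tetrablock_subset_polydisc (x₁ x₂ x₃ : ℂ)
    (h : ‖x₁ - (starRingEnd ℂ) x₂ * x₃‖ +
         ‖x₂ - (starRingEnd ℂ) x₁ * x₃‖ +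
         (‖x₃‖) ^ 2 < 1) :
    ‖x₁‖ < 1 ∧ ‖x₂‖ < 1 := by
  have h₁ := norm_le_norm_sub_star_mul_add x₁ x₂ x₃
  have h₂ := norm_le_norm_sub_star_mul_add x₂ x₁ x₃
  rw [mul_comm ‖x₂‖] at h₁
  rw [mul_comm ‖x₁‖] at h₂
  have h' : ‖x₂ - star x₁ * x₃‖ + ‖x₁ - star x₂ * x₃‖ + ‖x₃‖ ^ 2 < 1 := by
    rw [add_comm ‖x₂ - _‖]; exact h
  exact ⟨lt_one_of_le_add_mul_of_le_add_mul (norm_nonneg _) (norm_nonneg _) (norm_nonneg _) h₁ h₂ h,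
    lt_one_of_le_add_mul_of_le_add_mul (norm_nonneg _) (norm_nonneg _) (norm_nonneg _) h₂ h₁ h'⟩
end

section
/- For any x ∈ C^3 there exists ω ∈ C with |ω| = 1 such that |x1 + ω·x2 - conj(x1 + ω·x2)·ω·x3| = |x1 - conj(x2)·x3| + |x2 - conj(x1)·x3|. -/
open Complex

/-!
For `|ω| = 1`, the expression `s - conj(s) p` with `s = x₁ + ω x₂`, `p = ω x₃` is affine in `ω`:
it equals `a + ω b` with `a = x₁ - conj(x₂) x₃` and `b = x₂ - conj(x₁) x₃`. Choosing
`ω = exp(i (arg a - arg b))` rotates `ω b` onto the ray of `a`, so the triangle inequality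
`|a + ω b| ≤ |a| + |b|` becomes an equality.
-/

theorem add_mul_sub_star_mul_eq {R : Type*} [CommRing R] [StarRing R] {ω : R}
    (hω : star ω * ω = 1) (x₁ x₂ x₃ : R) :
    x₁ + ω * x₂ - star (x₁ + ω * x₂) * (ω * x₃) =
      (x₁ - star x₂ * x₃) + ω * (x₂ - star x₁ * x₃) := by
  rw [star_add, star_mul']
  linear_combination (-star x₂ * x₃) * hω

theorem Complex.exists_norm_eq_one_and_norm_add_mul_eq (a b : ℂ) :
    ∃ ω : ℂ, ‖ω‖ = 1 ∧ ‖a + ω * b‖ = ‖a‖ + ‖b‖ := by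
  refine ⟨exp (↑(arg a - arg b) * I), norm_exp_ofReal_mul_I _, ?_⟩
  set u := exp (↑(arg a) * I)
  set v := exp (↑(arg b) * I)
  have ha : ↑‖a‖ * u = a := norm_mul_exp_arg_mul_I a
  have hb : ↑‖b‖ * v = b := norm_mul_exp_arg_mul_I b
  have hv : v * v⁻¹ = 1 := mul_inv_cancel₀ (exp_ne_zero _)
  have h : a + exp (↑(arg a - arg b) * I) * b = ↑(‖a‖ + ‖b‖) * u := by
    rw [ofReal_sub, sub_mul, exp_sub, div_eq_mul_inv, ofReal_add]
    linear_combination -ha - u * v⁻¹ * hb + ↑‖b‖ * u * hv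
  rw [h, norm_mul, norm_exp_ofReal_mul_I, norm_real, Real.norm_of_nonneg (by positivity), mul_one]

theorem tetrablock_key_equality (x₁ x₂ x₃ : ℂ) :
    ∃ ω : ℂ, ‖ω‖ = 1 ∧
      ‖x₁ + ω * x₂ - (starRingEnd ℂ) (x₁ + ω * x₂) * (ω * x₃)‖ =
        ‖x₁ - (starRingEnd ℂ) x₂ * x₃‖ +
        ‖x₂ - (starRingEnd ℂ) x₁ * x₃‖ := by
  obtain ⟨ω, hω, hnorm⟩ :=
    exists_norm_eq_one_and_norm_add_mul_eq (x₁ - star x₂ * x₃) (x₂ - star x₁ * x₃)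
  have hunit : star ω * ω = 1 := by
    rw [star_def, conj_mul', hω, ofReal_one, one_pow]
  simp only [← star_def]
  exact ⟨ω, hω, by rwa [add_mul_sub_star_mul_eq hunit]⟩
end

section
/- If x ∈ E then for every ω with |ω| ≤ 1, (x1 + ω·x2, ω·x3) ∈ G2. -/
open Complex

def tetrablockE : Set (ℂ × ℂ × ℂ) :=
  {x | ‖x.1 - (starRingEnd ℂ) x.2.1 * x.2.2‖ +
       ‖x.2.1 - (starRingEnd ℂ) x.1 * x.2.2‖ +
       (‖x.2.2‖) ^ 2 < 1}

def symBidisc : Set (ℂ × ℂ) :=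
  {p | ‖p.1 - (starRingEnd ℂ) p.1 * p.2‖ + (‖p.2‖) ^ 2 < 1}

/-!
With `s = x₁ + ω x₂` and `p = ω x₃` one has the identity
`s - s̄ p = (x₁ - x̄₂ x₃) + ω (x₂ - x̄₁ x₃) + (1 - |ω|²) x̄₂ x₃`,
so `|s - s̄ p| + |p|² ≤ a + t b + (1 - t²) |x₂| c + t² c²` where `a, b, c, t` are the norms of
`x₁ - x̄₂ x₃`, `x₂ - x̄₁ x₃`, `x₃`, `ω`. Two triangle inequalities give `|x₂| (1 - c²) ≤ b + a c`,
and together with `a + b + c² < 1` this forces the right-hand side below `1`.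
-/

open ComplexConjugate

theorem norm_mul_one_sub_sq_le (x₁ x₂ x₃ : ℂ) :
    ‖x₂‖ * (1 - ‖x₃‖ ^ 2) ≤ ‖x₂ - conj x₁ * x₃‖ + ‖x₁ - conj x₂ * x₃‖ * ‖x₃‖ := by
  have h₁ : ‖x₁‖ ≤ ‖x₁ - conj x₂ * x₃‖ + ‖x₂‖ * ‖x₃‖ := by
    simpa [norm_mul] using norm_le_norm_sub_add x₁ (conj x₂ * x₃)
  have h₂ : ‖x₂‖ ≤ ‖x₂ - conj x₁ * x₃‖ + ‖x₁‖ * ‖x₃‖ := by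
    simpa [norm_mul] using norm_le_norm_sub_add x₂ (conj x₁ * x₃)
  nlinarith [mul_le_mul_of_nonneg_right h₁ (norm_nonneg x₃)]

theorem norm_one_sub_mul_conj_self {ω : ℂ} (hω : ‖ω‖ ≤ 1) :
    ‖1 - ω * conj ω‖ = 1 - ‖ω‖ ^ 2 := by
  rw [mul_conj, ← Complex.sq_norm, ← ofReal_one, ← ofReal_sub, norm_real,
    Real.norm_of_nonneg (by nlinarith [norm_nonneg ω])]

theorem norm_sub_conj_mul_le (x₁ x₂ x₃ : ℂ) {ω : ℂ} (hω : ‖ω‖ ≤ 1) :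
    ‖(x₁ + ω * x₂) - conj (x₁ + ω * x₂) * (ω * x₃)‖ ≤
      ‖x₁ - conj x₂ * x₃‖ + ‖ω‖ * ‖x₂ - conj x₁ * x₃‖ + (1 - ‖ω‖ ^ 2) * (‖x₂‖ * ‖x₃‖) := by
  have hid : (x₁ + ω * x₂) - conj (x₁ + ω * x₂) * (ω * x₃) =
      (x₁ - conj x₂ * x₃) + ω * (x₂ - conj x₁ * x₃) + (1 - ω * conj ω) * (conj x₂ * x₃) := by
    simp only [map_add, map_mul]
    ring
  rw [hid]
  refine norm_add₃_le.trans ?_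
  simp only [norm_mul, norm_one_sub_mul_conj_self hω, Complex.norm_conj, le_refl]

theorem tetrablock_bound_lt_one {a b c t X : ℝ} (ha : 0 ≤ a) (hb : 0 ≤ b) (hc : 0 ≤ c) (ht : 0 ≤ t)
    (ht₁ : t ≤ 1) (habc : a + b + c ^ 2 < 1) (hX : X * (1 - c ^ 2) ≤ b + a * c) :
    a + t * b + (1 - t ^ 2) * (X * c) + t ^ 2 * c ^ 2 < 1 := by
  have hc₁ : c ^ 2 < 1 := by linarith [sq_nonneg c]
  -- `1 - (a + t b + (1 - t²) X c + t² c²) = (1 - a - b - c²) + (1 - t) (b - (1 + t) c (X - c))`,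
  -- and when `X ≥ c`, `hkey` says `b - 2 c (X - c) > -(1 - a - b - c²)`.
  have hkey : a + 2 * c * X < 1 + c ^ 2 := by
    have h2c : 2 * c ≤ 1 + c ^ 2 := by nlinarith [sq_nonneg (c - 1)]
    have : (a + 2 * c * X) * (1 - c ^ 2) < (1 + c ^ 2) * (1 - c ^ 2) := by
      nlinarith [mul_le_mul_of_nonneg_left h2c hb]
    exact lt_of_mul_lt_mul_right this (by linarith)
  have h1t : 0 ≤ 1 - t := sub_nonneg.2 ht₁
  rcases le_total X c with hXc | hXc
  · nlinarith [mul_nonneg (mul_nonneg h1t (by linarith : 0 ≤ 1 + t))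
      (mul_nonneg hc (sub_nonneg.2 hXc)), mul_nonneg h1t hb]
  · nlinarith [mul_nonneg (mul_nonneg h1t h1t) (mul_nonneg hc (sub_nonneg.2 hXc)),
      mul_nonneg ht hb, mul_nonneg h1t hb]

theorem tetrablock_to_symBidisc (x : ℂ × ℂ × ℂ) (hx : x ∈ tetrablockE)
    (ω : ℂ) (hω : ‖ω‖ ≤ 1) :
    (x.1 + ω * x.2.1, ω * x.2.2) ∈ symBidisc := by
  obtain ⟨x₁, x₂, x₃⟩ := x
  have hbound := tetrablock_bound_lt_one (norm_nonneg _) (norm_nonneg _) (norm_nonneg x₃) (norm_nonneg ω) hω hx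
    (norm_mul_one_sub_sq_le x₁ x₂ x₃)
  show ‖(x₁ + ω * x₂) - conj (x₁ + ω * x₂) * (ω * x₃)‖ + ‖ω * x₃‖ ^ 2 < 1
  rw [norm_mul, mul_pow]
  linarith [norm_sub_conj_mul_le x₁ x₂ x₃ hω]
end

section
/- The symmetrized bidisc G2 = {(s,p) ∈ C^2 : |s - conj(s)p| + |p|^2 < 1} equals the image of the bidisc D^2 under the map π(z1,z2) = (z1+z2, z1·z2). -/
/-!
For `s = z + w` and `p = z w` one has `s - s̄ p = (1 - |w|²) z + (1 - |z|²) w`, and with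
`a = |z|`, `b = |w|` the identity `1 - (a(1 - b²) + b(1 - a²) + a²b²) = (1 - a)(1 - b)(1 - ab)`
decides everything. If `a, b < 1`, the triangle inequality bounds the defining quantity of `G₂`
above by `1 - (1 - a)(1 - b)(1 - ab) < 1`. If `a ≥ 1` (say) and `(s, p) ∈ G₂`, then `ab < 1`,
so `b < 1`, and the reverse triangle inequality bounds the same quantity below by
`1 - (1 - a)(1 - b)(1 - ab) ≥ 1`. Hence `π⁻¹(G₂) = 𝔻²`, and `π` is onto because every monic
quadratic over `ℂ` has a root.
-/

open Complex ComplexConjugate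

theorem one_sub_mul_one_sub_mul_one_sub_mul (a b : ℝ) :
    (1 - a) * (1 - b) * (1 - a * b) = 1 - (a * (1 - b ^ 2) + b * (1 - a ^ 2) + (a * b) ^ 2) := by
  ring

theorem IsAlgClosed.surjective_add_mul {k : Type*} [Field k] [IsAlgClosed k] :
    Function.Surjective fun z : k × k => (z.1 + z.2, z.1 * z.2) := by
  rintro ⟨s, p⟩
  open Polynomial in
  obtain ⟨z, hz⟩ := IsAlgClosed.exists_root (C 1 * X ^ 2 + C (-s) * X + C p)
    (by rw [degree_quadratic one_ne_zero]; decide)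
  refine ⟨(z, s - z), Prod.ext (add_sub_cancel z s) ?_⟩
  simp only [IsRoot, eval_add, eval_mul, eval_C, eval_pow, eval_X] at hz
  linear_combination -hz

namespace Complex

theorem add_sub_conj_add_mul_mul (z w : ℂ) :
    (z + w) - conj (z + w) * (z * w) = (1 - ‖w‖ ^ 2) • z + (1 - ‖z‖ ^ 2) • w := by
  simp only [map_add, real_smul, ofReal_sub, ofReal_one, ofReal_pow, ← mul_conj']
  ring

theorem norm_lt_one_of_norm_add_sub_conj_lt_one {z w : ℂ}
    (h : ‖(z + w) - conj (z + w) * (z * w)‖ + ‖z * w‖ ^ 2 < 1) : ‖z‖ < 1 := by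
  rw [add_sub_conj_add_mul_mul, norm_mul] at h
  set a := ‖z‖
  set b := ‖w‖
  have hb : 0 ≤ b := norm_nonneg w
  have hab : a * b < 1 := by nlinarith [norm_nonneg ((1 - b ^ 2) • z + (1 - a ^ 2) • w)]
  by_contra! ha
  have hb1 : b < 1 := by nlinarith
  have hlower : a * (1 - b ^ 2) + b * (1 - a ^ 2) ≤ ‖(1 - b ^ 2) • z + (1 - a ^ 2) • w‖ := by
    have := norm_le_add_norm_add ((1 - b ^ 2) • z) ((1 - a ^ 2) • w)
    rw [norm_smul, norm_smul, Real.norm_of_nonneg (by nlinarith),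
      Real.norm_of_nonpos (by nlinarith)] at this
    linarith
  have hsign : 0 ≤ (a - 1) * (1 - b) * (1 - a * b) := by
    apply mul_nonneg (mul_nonneg _ _) <;> linarith
  linarith [one_sub_mul_one_sub_mul_one_sub_mul a b]

theorem norm_add_sub_conj_lt_one {z w : ℂ} (hz : ‖z‖ < 1) (hw : ‖w‖ < 1) :
    ‖(z + w) - conj (z + w) * (z * w)‖ + ‖z * w‖ ^ 2 < 1 := by
  rw [add_sub_conj_add_mul_mul, norm_mul]
  set a := ‖z‖
  set b := ‖w‖
  have ha : 0 ≤ a := norm_nonneg z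
  have hb : 0 ≤ b := norm_nonneg w
  have hupper : ‖(1 - b ^ 2) • z + (1 - a ^ 2) • w‖ ≤ a * (1 - b ^ 2) + b * (1 - a ^ 2) := by
    refine (norm_add_le _ _).trans_eq ?_
    rw [norm_smul, norm_smul, Real.norm_of_nonneg (by nlinarith),
      Real.norm_of_nonneg (by nlinarith), mul_comm, mul_comm (1 - a ^ 2)]
  have hsign : 0 < (1 - a) * (1 - b) * (1 - a * b) := by
    apply mul_pos (mul_pos _ _) <;> nlinarith
  linarith [one_sub_mul_one_sub_mul_one_sub_mul a b]

theorem norm_add_sub_conj_lt_one_iff (z w : ℂ) :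
    ‖(z + w) - conj (z + w) * (z * w)‖ + ‖z * w‖ ^ 2 < 1 ↔ ‖z‖ < 1 ∧ ‖w‖ < 1 := by
  refine ⟨fun h ↦ ⟨norm_lt_one_of_norm_add_sub_conj_lt_one h, ?_⟩,
    fun h ↦ norm_add_sub_conj_lt_one h.1 h.2⟩
  rw [add_comm z, mul_comm z] at h
  exact norm_lt_one_of_norm_add_sub_conj_lt_one h

theorem preimage_add_mul_symBidisc :
    (fun z : ℂ × ℂ => (z.1 + z.2, z.1 * z.2)) ⁻¹'
        {p : ℂ × ℂ | ‖p.1 - conj p.1 * p.2‖ + ‖p.2‖ ^ 2 < 1} =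
      {z : ℂ × ℂ | ‖z.1‖ < 1 ∧ ‖z.2‖ < 1} := by
  ext ⟨z, w⟩
  exact norm_add_sub_conj_lt_one_iff z w

end Complex

theorem symBidisc_eq_image :
    {p : ℂ × ℂ | ‖p.1 - (starRingEnd ℂ) p.1 * p.2‖ +
        (‖p.2‖) ^ 2 < 1} =
      (fun z : ℂ × ℂ => (z.1 + z.2, z.1 * z.2)) ''
        {z : ℂ × ℂ | ‖z.1‖ < 1 ∧ ‖z.2‖ < 1} := by
  rw [← preimage_add_mul_symBidisc, Set.image_preimage_eq _ IsAlgClosed.surjective_add_mul]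
end

section
/- Let x ∈ C^3, ω ∈ C with 0 < |ω| ≤ 1, and (a,c) ∈ C^2 \ {0}. If the hyperplane {y ∈ C^3 : a·y1 + a·ω·y2 + c·ω·y3 = a·x1 + a·ω·x2 + c·ω·x3} is disjoint from E, then the affine line {(s,p) : a·s + c·p = a·(x1 + ω·x2) + c·ω·x3} is disjoint from G_{2,|ω|}. -/
open Complex

def Drho (ρ : ℝ) : Set (ℂ × ℂ) :=
  {z | ‖z.1‖ < 1 ∧ ‖z.2‖ < 1 ∧ ‖z.1 * z.2‖ < ρ}

def G2rho (ρ : ℝ) : Set (ℂ × ℂ) :=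
  (fun z : ℂ × ℂ => (z.1 + z.2, z.1 * z.2)) '' Drho ρ

/-!
A point `(s, p) = (z₁ + z₂, z₁ z₂)` of `G_{2,|ω|}` is `Φ_ω(y) = (y₁ + ω y₂, ω y₃)` for an explicit
`y ∈ E`: with `w = p / ω` (so `|w| < 1`) and `β = (s - p s̄) / (1 - |p|²)`, which satisfies
`|β| < 1` and `β + p β̄ = s`, take `y = (β, β̄ w, w)`. Since the hyperplane is `Φ_ω⁻¹` of the line,
the line meeting `G_{2,|ω|}` at `(s, p)` forces the hyperplane to meet `E` at `y`.
-/

open ComplexConjugate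

def tetrablockPhi (ω : ℂ) (y : ℂ × ℂ × ℂ) : ℂ × ℂ := (y.1 + ω * y.2.1, ω * y.2.2)

theorem norm_ofReal_one_sub_sq {r : ℝ} (h0 : 0 ≤ r) (h1 : r < 1) :
    ‖((1 - r ^ 2 : ℝ) : ℂ)‖ = 1 - r ^ 2 := by
  rw [norm_real, Real.norm_eq_abs, abs_of_pos (by nlinarith)]

theorem add_sub_mul_mul_conj_add_eq (z₁ z₂ : ℂ) :
    z₁ + z₂ - z₁ * z₂ * conj (z₁ + z₂) =
      z₁ * ((1 - ‖z₂‖ ^ 2 : ℝ) : ℂ) + z₂ * ((1 - ‖z₁‖ ^ 2 : ℝ) : ℂ) := by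
  rw [map_add]
  push_cast
  linear_combination (-z₂) * mul_conj' z₁ + (-z₁) * mul_conj' z₂

theorem norm_add_sub_mul_mul_conj_add_lt {z₁ z₂ : ℂ} (h₁ : ‖z₁‖ < 1) (h₂ : ‖z₂‖ < 1) :
    ‖z₁ + z₂ - z₁ * z₂ * conj (z₁ + z₂)‖ < 1 - ‖z₁ * z₂‖ ^ 2 := by
  set a := ‖z₁‖
  set b := ‖z₂‖
  have ha : 0 ≤ a := norm_nonneg _
  have hb : 0 ≤ b := norm_nonneg _
  rw [add_sub_mul_mul_conj_add_eq, norm_mul]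
  calc _ ≤ a * (1 - b ^ 2) + b * (1 - a ^ 2) := by
        refine (norm_add_le _ _).trans_eq ?_
        rw [norm_mul, norm_mul, norm_ofReal_one_sub_sq hb h₂, norm_ofReal_one_sub_sq ha h₁]
    _ = (a + b) * (1 - a * b) := by ring
    _ < (1 + a * b) * (1 - a * b) := by
        have : 0 < (1 - a) * (1 - b) := mul_pos (by linarith) (by linarith)
        exact mul_lt_mul_of_pos_right (by linarith) (by nlinarith)
    _ = 1 - (a * b) ^ 2 := by ring

theorem exists_norm_lt_one_add_mul_conj_eq {z₁ z₂ : ℂ} (h₁ : ‖z₁‖ < 1) (h₂ : ‖z₂‖ < 1) :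
    ∃ β : ℂ, ‖β‖ < 1 ∧ β + z₁ * z₂ * conj β = z₁ + z₂ := by
  set s := z₁ + z₂
  set p := z₁ * z₂
  have hp : ‖p‖ < 1 := by
    rw [norm_mul]; nlinarith [norm_nonneg z₁, norm_nonneg z₂]
  have hd : 0 < 1 - ‖p‖ ^ 2 := by nlinarith [norm_nonneg p]
  refine ⟨(s - p * conj s) / ((1 - ‖p‖ ^ 2 : ℝ) : ℂ), ?_, ?_⟩
  · rw [norm_div, norm_ofReal_one_sub_sq (norm_nonneg p) hp, div_lt_one hd]
    exact norm_add_sub_mul_mul_conj_add_lt h₁ h₂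
  · have hdC : ((1 - ‖p‖ ^ 2 : ℝ) : ℂ) ≠ 0 := ofReal_ne_zero.mpr hd.ne'
    rw [map_div₀, conj_ofReal]
    field_simp
    push_cast
    simp only [map_sub, map_mul, conj_conj]
    linear_combination (-s) * mul_conj' p

theorem mk_mem_tetrablockE {β w : ℂ} (hβ : ‖β‖ < 1) (hw : ‖w‖ < 1) :
    (β, conj β * w, w) ∈ tetrablockE := by
  have h₁ : β - conj (conj β * w) * w = β * ((1 - ‖w‖ ^ 2 : ℝ) : ℂ) := by
    rw [map_mul, conj_conj]
    push_cast
    linear_combination (-β) * mul_conj' w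
  show ‖β - conj (conj β * w) * w‖ + ‖conj β * w - conj β * w‖ + ‖w‖ ^ 2 < 1
  rw [h₁, sub_self, norm_zero, norm_mul, norm_ofReal_one_sub_sq (norm_nonneg w) hw]
  nlinarith [mul_pos (sub_pos.mpr hβ) (sub_pos.mpr (pow_lt_one₀ (norm_nonneg w) hw two_ne_zero))]

theorem G2rho_subset_image_tetrablockPhi (ω : ℂ) :
    G2rho ‖ω‖ ⊆ tetrablockPhi ω '' tetrablockE := by
  rintro _ ⟨⟨z₁, z₂⟩, ⟨h₁, h₂, hρ⟩, rfl⟩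
  obtain ⟨β, hβ, hβs⟩ := exists_norm_lt_one_add_mul_conj_eq h₁ h₂
  have hω : ω ≠ 0 := norm_pos_iff.mp ((norm_nonneg _).trans_lt hρ)
  have hw : ‖z₁ * z₂ / ω‖ < 1 := by
    rwa [norm_div, div_lt_one (norm_pos_iff.mpr hω)]
  refine ⟨_, mk_mem_tetrablockE hβ hw, ?_⟩
  simp only [tetrablockPhi, Prod.mk.injEq]
  constructor
  · rw [← hβs]; field_simp
  · field_simp

theorem hyperplane_disjoint_implies_line_disjoint_general
    (x : ℂ × ℂ × ℂ) (ω : ℂ)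
    (a c : ℂ)
    (h : ∀ y : ℂ × ℂ × ℂ,
      a * y.1 + a * ω * y.2.1 + c * ω * y.2.2 =
        a * x.1 + a * ω * x.2.1 + c * ω * x.2.2 →
      y ∉ tetrablockE) :
    ∀ sp : ℂ × ℂ, a * sp.1 + c * sp.2 = a * (x.1 + ω * x.2.1) + c * (ω * x.2.2) →
      sp ∉ G2rho ‖ω‖ := by
  intro sp hline hsp
  obtain ⟨y, hy, rfl⟩ := G2rho_subset_image_tetrablockPhi ω hsp
  refine h y ?_ hy
  simp only [tetrablockPhi] at hline
  linear_combination hline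

theorem hyperplane_disjoint_implies_line_disjoint
    (x : ℂ × ℂ × ℂ) (ω : ℂ) (hω0 : 0 < ‖ω‖) (hω1 : ‖ω‖ ≤ 1)
    (a c : ℂ) (hac : (a, c) ≠ (0, 0))
    (h : ∀ y : ℂ × ℂ × ℂ,
      a * y.1 + a * ω * y.2.1 + c * ω * y.2.2 =
        a * x.1 + a * ω * x.2.1 + c * ω * x.2.2 →
      y ∉ tetrablockE) :
    ∀ sp : ℂ × ℂ, a * sp.1 + c * sp.2 = a * (x.1 + ω * x.2.1) + c * (ω * x.2.2) →
      sp ∉ G2rho ‖ω‖ :=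
  hyperplane_disjoint_implies_line_disjoint_general x ω a c h
end

section
/- For r ∈ [0,1) and every ω ∈ C with |ω| ≤ 1, the complex hyperplane {y ∈ C^3 : -(y1 - 1) - ω·(y2 - r) + ω·(y3 - r) = 0} through the boundary point (1, r, r) is disjoint from the tetrablock E. -/
/-!
On the hyperplane, `1 - y₁ - ω y₂ + ω y₃ = 0`, i.e. `1 - x₁ z - x₂ w + x₃ z w` vanishes at
`(z, w) = (1, ω)`. For `x ∈ E` and `|z| = 1` one has `|x₂ - x₃ z| < |1 - x₁ z|`, so this
polynomial has no zero with `|w| ≤ 1`. The strict inequality comes from expanding both squares,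
which reduces it to `2 |x₁ - x̄₂ x₃| < 1 + |x₁|² - |x₂|² - |x₃|²`, and from the identity
`|x₁ - x̄₂ x₃|² - |x₂ - x̄₁ x₃|² = (|x₁|² - |x₂|²)(1 - |x₃|²)`, which turns that into
`|x₂ - x̄₁ x₃| < 1 - |x₃|² - |x₁ - x̄₂ x₃|`.
-/

open Complex

open ComplexConjugate

lemma sq_norm_sub_conj_mul_sub_sq_norm_sub_conj_mul (a b c : ℂ) :
    ‖a - conj b * c‖ ^ 2 - ‖b - conj a * c‖ ^ 2 = (‖a‖ ^ 2 - ‖b‖ ^ 2) * (1 - ‖c‖ ^ 2) := by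
  simp only [Complex.sq_norm, normSq_apply, sub_re, sub_im, mul_re, mul_im, conj_re, conj_im]
  ring

lemma sq_norm_one_sub_mul_sub_sq_norm_sub_mul (a b c : ℂ) {z : ℂ} (hz : ‖z‖ = 1) :
    ‖1 - a * z‖ ^ 2 - ‖b - c * z‖ ^ 2
      = 1 + ‖a‖ ^ 2 - ‖b‖ ^ 2 - ‖c‖ ^ 2 - 2 * (z * (a - conj b * c)).re := by
  have hz2 : z.re * z.re + z.im * z.im = 1 := by
    rw [← normSq_apply, ← Complex.sq_norm, hz, one_pow]
  simp only [Complex.sq_norm, normSq_apply, sub_re, sub_im, mul_re, mul_im, conj_re, conj_im,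
    one_re, one_im]
  linear_combination (a.re * a.re + a.im * a.im - c.re * c.re - c.im * c.im) * hz2

lemma two_mul_norm_lt_of_mem_tetrablockE {x : ℂ × ℂ × ℂ} (hx : x ∈ tetrablockE) :
    2 * ‖x.1 - conj x.2.1 * x.2.2‖ < 1 + ‖x.1‖ ^ 2 - ‖x.2.1‖ ^ 2 - ‖x.2.2‖ ^ 2 := by
  obtain ⟨a, b, c⟩ := x
  have hE : ‖a - conj b * c‖ + ‖b - conj a * c‖ + ‖c‖ ^ 2 < 1 := hx
  have hid := sq_norm_sub_conj_mul_sub_sq_norm_sub_conj_mul a b c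
  have hv_lt : ‖b - conj a * c‖ < 1 - ‖c‖ ^ 2 - ‖a - conj b * c‖ := by linarith
  have hc : 0 < 1 - ‖c‖ ^ 2 := by
    linarith [norm_nonneg (a - conj b * c), norm_nonneg (b - conj a * c)]
  -- multiplied by `1 - |c|²`, the claim is `|b - ā c|² < (1 - |c|² - |a - b̄ c|)²`
  refine lt_of_mul_lt_mul_right ?_ hc.le
  nlinarith [mul_self_lt_mul_self (norm_nonneg _) hv_lt]

lemma norm_sub_mul_lt_norm_one_sub_mul_of_mem_tetrablockE {x : ℂ × ℂ × ℂ}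
    (hx : x ∈ tetrablockE) {z : ℂ} (hz : ‖z‖ = 1) :
    ‖x.2.1 - x.2.2 * z‖ < ‖1 - x.1 * z‖ := by
  have hre : (z * (x.1 - conj x.2.1 * x.2.2)).re ≤ ‖x.1 - conj x.2.1 * x.2.2‖ := by
    simpa [hz] using re_le_norm (z * (x.1 - conj x.2.1 * x.2.2))
  have hsq := sq_norm_one_sub_mul_sub_sq_norm_sub_mul x.1 x.2.1 x.2.2 hz
  have hlt := two_mul_norm_lt_of_mem_tetrablockE hx
  exact (sq_lt_sq₀ (norm_nonneg _) (norm_nonneg _)).mp (by linarith)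

lemma one_sub_mul_sub_mul_add_mul_ne_zero_of_mem_tetrablockE {x : ℂ × ℂ × ℂ}
    (hx : x ∈ tetrablockE) {z w : ℂ} (hz : ‖z‖ = 1) (hw : ‖w‖ ≤ 1) :
    1 - x.1 * z - x.2.1 * w + x.2.2 * z * w ≠ 0 := by
  intro h
  have hlt := norm_sub_mul_lt_norm_one_sub_mul_of_mem_tetrablockE hx hz
  have heq : 1 - x.1 * z = w * (x.2.1 - x.2.2 * z) := by linear_combination h
  have hle : ‖1 - x.1 * z‖ ≤ ‖x.2.1 - x.2.2 * z‖ := by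
    rw [heq, norm_mul]
    exact mul_le_of_le_one_left (norm_nonneg _) hw
  exact hle.not_gt hlt

theorem supporting_hyperplane_at_one_r_r_general (r : ℝ)
    (ω : ℂ) (hω : ‖ω‖ ≤ 1) :
    ∀ y : ℂ × ℂ × ℂ,
      -(y.1 - 1) - ω * (y.2.1 - (r : ℂ)) + ω * (y.2.2 - (r : ℂ)) = 0 →
      y ∉ tetrablockE := by
  intro y hy hE
  refine one_sub_mul_sub_mul_add_mul_ne_zero_of_mem_tetrablockE hE (z := 1) norm_one hω ?_
  linear_combination hy

theorem supporting_hyperplane_at_one_r_r (r : ℝ) (hr0 : 0 ≤ r) (hr1 : r < 1)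
    (ω : ℂ) (hω : ‖ω‖ ≤ 1) :
    ∀ y : ℂ × ℂ × ℂ,
      -(y.1 - 1) - ω * (y.2.1 - (r : ℂ)) + ω * (y.2.2 - (r : ℂ)) = 0 →
      y ∉ tetrablockE :=
  supporting_hyperplane_at_one_r_r_general r ω hω
end

section
/- Let ρ ∈ (0,1), and let λ1, λ2 ∈ C with |λ1| < ρ and |λ2| = 1. Then the affine complex line {(s,p) ∈ C^2 : -λ2·s + p = -λ2·(λ1+λ2) + λ1·λ2} through π(λ1,λ2) is disjoint from G_{2,ρ}. -/
open Complex

/-! The line is the image under `π` of the two lines `{z₁ = λ₂}` and `{z₂ = λ₂}`, which miss the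
open bidisc because `|λ₂| = 1`. -/

theorem neg_mul_add_add_mul_eq_neg_mul_self_iff {R : Type*} [CommRing R] [NoZeroDivisors R]
    (a x y : R) : -a * (x + y) + x * y = -a * a ↔ x = a ∨ y = a := by
  rw [← sub_eq_zero, ← sub_eq_zero (a := x), ← sub_eq_zero (a := y), ← mul_eq_zero]
  constructor <;> intro h <;> linear_combination h

theorem supporting_line_smooth_case_general (ρ : ℝ)
    (lam₁ lam₂ : ℂ) (h2 : ‖lam₂‖ = 1) :
    ∀ sp : ℂ × ℂ,
      -lam₂ * sp.1 + sp.2 = -lam₂ * (lam₁ + lam₂) + lam₁ * lam₂ →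
      sp ∉ G2rho ρ := by
  rintro sp h ⟨z, ⟨hz₁, hz₂, -⟩, rfl⟩
  have hline : -lam₂ * (z.1 + z.2) + z.1 * z.2 = -lam₂ * lam₂ := by
    linear_combination h
  rcases (neg_mul_add_add_mul_eq_neg_mul_self_iff lam₂ z.1 z.2).1 hline with rfl | rfl
  · exact hz₁.ne h2
  · exact hz₂.ne h2

theorem supporting_line_smooth_case (ρ : ℝ) (hρ0 : 0 < ρ) (hρ1 : ρ < 1)
    (lam₁ lam₂ : ℂ) (h1 : ‖lam₁‖ < ρ) (h2 : ‖lam₂‖ = 1) :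
    ∀ sp : ℂ × ℂ,
      -lam₂ * sp.1 + sp.2 = -lam₂ * (lam₁ + lam₂) + lam₁ * lam₂ →
      sp ∉ G2rho ρ :=
  supporting_line_smooth_case_general ρ lam₁ lam₂ h2
end

section
/- For n ≥ 2, a complex hyperplane L = {x ∈ C^n : t1·x1 + ... + tn·xn = 0} satisfies ((1,...,1) + L) ∩ D^n = ∅ for the unit polydisc D^n if and only if [t] = [t'] in projective space for some t' ∈ [0,∞)^n \ {0}; i.e. the set of hyperplanes through (1,...,1) missing D^n is exactly {[(t1,...,tn)] : ti ≥ 0, not all zero}. -/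
/-!
With `y = 1 + x`, the hyperplane misses `Dⁿ` iff `∑ tᵢ yᵢ = ∑ tᵢ` has no solution with all
`‖yᵢ‖ < 1`. As `y` ranges over `Dⁿ`, `∑ tᵢ yᵢ` fills the open disc of radius `∑ ‖tᵢ‖`
(take `yᵢ` proportional to `conj tᵢ / ‖tᵢ‖`), so the hyperplane misses `Dⁿ` iff
`‖∑ tᵢ‖ = ∑ ‖tᵢ‖`. By the equality case of the triangle inequality this says that every `tᵢ`
lies on the ray through `∑ tᵢ`, i.e. `conj (∑ tᵢ) * tᵢ ≥ 0`. Conversely, if all `c * tᵢ ≥ 0`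
then `Re (c * ∑ tᵢ xᵢ) < 0` whenever `1 + x ∈ Dⁿ`, since then every `Re xᵢ < 0`.
-/

open ComplexOrder ComplexConjugate

namespace Complex

lemma exists_nonneg_real_eq_iff {z : ℂ} : (∃ r : ℝ, 0 ≤ r ∧ z = r) ↔ 0 ≤ z := by
  constructor
  · rintro ⟨r, hr, rfl⟩
    exact_mod_cast hr
  · intro h
    exact ⟨z.re, (nonneg_iff.1 h).1, eq_re_of_ofReal_le (r := 0) (by simpa using h)⟩

lemma re_neg_of_norm_one_add_lt_one {z : ℂ} (h : ‖1 + z‖ < 1) : z.re < 0 := by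
  have := re_le_norm (1 + z)
  simp only [add_re, one_re] at this
  linarith

lemma mul_conj_div_norm (z : ℂ) : z * (conj z / ‖z‖) = ‖z‖ := by
  rcases eq_or_ne z 0 with rfl | hz
  · simp
  rw [← mul_div_assoc, mul_conj', pow_two, mul_div_cancel_right₀]
  exact_mod_cast norm_ne_zero_iff.2 hz

lemma norm_conj_div_norm_le_one (z : ℂ) : ‖conj z / ‖z‖‖ ≤ 1 := by
  rw [norm_div, norm_conj, norm_real, norm_norm]
  exact div_self_le_one _

section Sums

variable {ι : Type*} [Fintype ι]

lemma sum_mul_ne_zero_of_nonneg_of_re_neg {w x : ι → ℂ} (hw : ∀ i, 0 ≤ w i) (hw0 : w ≠ 0)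
    (hx : ∀ i, (x i).re < 0) : ∑ i, w i * x i ≠ 0 := by
  have hre : ∀ i, (w i * x i).re = (w i).re * (x i).re := fun i => by
    simp [mul_re, ← (nonneg_iff.1 (hw i)).2]
  obtain ⟨j, hj⟩ := Function.ne_iff.1 hw0
  have hwj : 0 < (w j).re := (pos_iff.1 (lt_of_le_of_ne (hw j) (Ne.symm hj))).1
  refine fun hsum => (Finset.sum_lt_sum (s := Finset.univ) (f := fun i => (w i * x i).re)
    (g := fun _ => 0) (fun i _ => ?_) ⟨j, Finset.mem_univ j, ?_⟩).ne ?_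
  · rw [hre]
    exact mul_nonpos_of_nonneg_of_nonpos (nonneg_iff.1 (hw i)).1 (hx i).le
  · rw [hre]
    exact mul_neg_of_pos_of_neg hwj (hx j)
  · rw [← re_sum, hsum, zero_re, Finset.sum_const_zero]

lemma exists_norm_lt_one_sum_mul_eq {t : ι → ℂ} {w : ℂ} (h : ‖w‖ < ∑ i, ‖t i‖) :
    ∃ y : ι → ℂ, (∀ i, ‖y i‖ < 1) ∧ ∑ i, t i * y i = w := by
  set A := ∑ i, ‖t i‖
  have hA : 0 < A := (norm_nonneg w).trans_lt h
  refine ⟨fun i => w / A * (conj (t i) / ‖t i‖), fun i => ?_, ?_⟩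
  · rw [norm_mul, norm_div, norm_real, Real.norm_of_nonneg hA.le]
    calc ‖w‖ / A * ‖conj (t i) / ‖t i‖‖ ≤ ‖w‖ / A * 1 :=
          mul_le_mul_of_nonneg_left (norm_conj_div_norm_le_one _) (by positivity)
      _ < 1 := by rw [mul_one, div_lt_one hA]; exact h
  · simp_rw [mul_left_comm (t _), mul_conj_div_norm, ← Finset.mul_sum, ← ofReal_sum]
    exact div_mul_cancel₀ _ (ofReal_ne_zero.2 hA.ne')

lemma nonneg_conj_sum_mul_of_sum_norm_le {t : ι → ℂ} (h : ∑ i, ‖t i‖ ≤ ‖∑ i, t i‖)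
    (i : ι) : 0 ≤ conj (∑ j, t j) * t i := by
  set S := ∑ j, t j
  have hle : ∀ j ∈ Finset.univ, (conj S * t j).re ≤ ‖conj S * t j‖ := fun j _ => re_le_norm _
  have hsum : ∑ j, (conj S * t j).re = ∑ j, ‖conj S * t j‖ := by
    refine le_antisymm (Finset.sum_le_sum hle) ?_
    calc ∑ j, ‖conj S * t j‖ = ‖S‖ * ∑ j, ‖t j‖ := by simp [Finset.mul_sum]
      _ ≤ ‖S‖ * ‖S‖ := mul_le_mul_of_nonneg_left h (norm_nonneg S)
      _ = ∑ j, (conj S * t j).re := by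
        rw [← re_sum, ← Finset.mul_sum, conj_mul', ← ofReal_pow, ofReal_re, pow_two]
  exact re_eq_norm.1 ((Finset.sum_eq_sum_iff_of_le hle).1 hsum i (Finset.mem_univ i))

lemma exists_ne_zero_forall_nonneg_mul_of_sum_norm_le {t : ι → ℂ}
    (h : ∑ i, ‖t i‖ ≤ ‖∑ i, t i‖) : ∃ c : ℂ, c ≠ 0 ∧ ∀ i, 0 ≤ c * t i := by
  by_cases hS : ∑ i, t i = 0
  · have ht : ∀ i ∈ Finset.univ, ‖t i‖ = 0 :=
      (Finset.sum_eq_zero_iff_of_nonneg fun i _ => norm_nonneg (t i)).1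
        (le_antisymm (by simpa [hS] using h) (by positivity))
    exact ⟨1, one_ne_zero, fun i => by simp [norm_eq_zero.1 (ht i (Finset.mem_univ i))]⟩
  · exact ⟨conj (∑ i, t i), (map_ne_zero _).2 hS, nonneg_conj_sum_mul_of_sum_norm_le h⟩

end Sums

end Complex

open Complex

theorem polydisc_supporting_hyperplanes_at_corner_general (n : ℕ)
    (t : Fin n → ℂ) (ht : t ≠ 0) :
    (∀ x : Fin n → ℂ, (∑ i, t i * x i) = 0 →
        ¬(∀ i, ‖1 + x i‖ < 1)) ↔
    (∃ c : ℂ, c ≠ 0 ∧ ∀ i, ∃ r : ℝ, 0 ≤ r ∧ c * t i = (r : ℂ)) := by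
  simp_rw [exists_nonneg_real_eq_iff]
  constructor
  · intro h
    apply exists_ne_zero_forall_nonneg_mul_of_sum_norm_le
    by_contra! hlt
    obtain ⟨y, hy, hty⟩ := exists_norm_lt_one_sum_mul_eq hlt
    exact h (y - 1) (by simp [mul_sub, Finset.sum_sub_distrib, hty]) (by simpa using hy)
  · rintro ⟨c, hc, hct⟩ x hx hx1
    refine sum_mul_ne_zero_of_nonneg_of_re_neg hct (smul_ne_zero hc ht)
      (fun i => re_neg_of_norm_one_add_lt_one (hx1 i)) ?_
    simp [mul_assoc, ← Finset.mul_sum, hx]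

theorem polydisc_supporting_hyperplanes_at_corner (n : ℕ) (hn : 2 ≤ n)
    (t : Fin n → ℂ) (ht : t ≠ 0) :
    (∀ x : Fin n → ℂ, (∑ i, t i * x i) = 0 →
        ¬(∀ i, ‖1 + x i‖ < 1)) ↔
    (∃ c : ℂ, c ≠ 0 ∧ ∀ i, ∃ r : ℝ, 0 ≤ r ∧ c * t i = (r : ℂ)) :=
  polydisc_supporting_hyperplanes_at_corner_general n t ht
end
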